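/- arXiv:2207.01215 — 4 statements merged into one kernel-verified Lean document; each statement's English description precedes it below -/
import Mathlib

section
/- Let m,n ≥ 2, A ≤ S_m and B ≤ S_n. For every k ≥ 0, the proportion of elements of the imprimitive wreath product A≀_I B having exactly k fixed points on [m]×[n] satisfies δ_k(A≀_I B) = ∑_{ℓ=0}^{n} δ_ℓ(B) · ∑_{(j_1,…,j_ℓ) nonneg integers, j_1+⋯+j_ℓ=k} ∏_{r=1}^{ℓ} δ_{j_r}(A). -/
open Equiv Finset

/-- The number of fixed points of a permutation. -/
noncomputable def fixCnt {X : Type*} (g : Equiv.Perm X) : ℕ := {x | g x = x}.ncard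

/-- The proportion of elements `a` of the set `C` such that the permutation `f a`
has exactly `k` fixed points. -/
noncomputable def propFixVia {α X : Type*} (f : α → Equiv.Perm X) (C : Set α) (k : ℕ) : ℝ :=
  (({a ∈ C | fixCnt (f a) = k}).ncard : ℝ) / (C.ncard : ℝ)

/-- `δ_k(C)`: the proportion of elements of `C ⊆ Sym(X)` with exactly `k` fixed points. -/
noncomputable def propFix {X : Type*} (C : Set (Equiv.Perm X)) (k : ℕ) : ℝ :=
  propFixVia id C k

/-- The element `(α, b)` of the wreath product acting on `X × Y` via the imprimitive
action `(x, y) ↦ (x α(y), y b)`. -/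
def imprimPerm {X Y : Type*} (α : Y → Equiv.Perm X) (b : Equiv.Perm Y) :
    Equiv.Perm (X × Y) where
  toFun p := (α p.2 p.1, b p.2)
  invFun p := ((α (b⁻¹ p.2))⁻¹ p.1, b⁻¹ p.2)
  left_inv p := by simp
  right_inv p := by simp

/-- The element `(α, b)` of the wreath product acting on `X^Y` via the power action
`(ω(α,b))(y) = ω(y b⁻¹) α(y b⁻¹)`. -/
def powerPerm {X Y : Type*} (α : Y → Equiv.Perm X) (b : Equiv.Perm Y) :
    Equiv.Perm (Y → X) where
  toFun ω y := α (b⁻¹ y) (ω (b⁻¹ y))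
  invFun ω y := (α y)⁻¹ (ω (b y))
  left_inv ω := by funext y; simp
  right_inv ω := by funext y; simp

/-- The number of cycles of a permutation in its disjoint cycle decomposition,
where fixed points are counted as 1-cycles. -/
noncomputable def cycleCnt {Y : Type*} [Fintype Y] [DecidableEq Y] (b : Equiv.Perm Y) : ℕ :=
  b.cycleType.card + fixCnt b

/-- The underlying set of the wreath product `A ≀ B` (pairs `(α, b)`). -/
def wreathSet {m n : ℕ} (A : Subgroup (Equiv.Perm (Fin m))) (B : Subgroup (Equiv.Perm (Fin n))) :
    Set ((Fin n → Equiv.Perm (Fin m)) × Equiv.Perm (Fin n)) :=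
  {p | (∀ y, p.1 y ∈ A) ∧ p.2 ∈ B}

/-- `δ_k(A ≀_I B)` for the imprimitive action on `[m] × [n]`. -/
noncomputable def deltaI {m n : ℕ} (A : Subgroup (Equiv.Perm (Fin m)))
    (B : Subgroup (Equiv.Perm (Fin n))) (k : ℕ) : ℝ :=
  propFixVia (fun p => imprimPerm p.1 p.2) (wreathSet A B) k

/-- `δ_k(A ≀_P B)` for the power action on `[m]^[n]`. -/
noncomputable def deltaP {m n : ℕ} (A : Subgroup (Equiv.Perm (Fin m)))
    (B : Subgroup (Equiv.Perm (Fin n))) (k : ℕ) : ℝ :=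
  propFixVia (fun p => powerPerm p.1 p.2) (wreathSet A B) k

/-- `[B, ℓ]`: the number of elements of `B` with exactly `ℓ` cycles. -/
noncomputable def stirCnt {n : ℕ} (B : Subgroup (Equiv.Perm (Fin n))) (ℓ : ℕ) : ℕ :=
  {b ∈ (B : Set (Equiv.Perm (Fin n))) | cycleCnt b = ℓ}.ncard

/-- A subgroup `A ≤ Sym(X)` is primitive if it is transitive and every block is trivial
(equivalently, it preserves no nontrivial partition of `X`). -/
def IsPrimitiveSubgroup {X : Type*} (A : Subgroup (Equiv.Perm X)) : Prop :=
  MulAction.IsPretransitive A X ∧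
  ∀ s : Set X, MulAction.IsBlock A s → s.Subsingleton ∨ s = Set.univ

/-! A point `(x, y)` is fixed by `(α, b)` exactly when `b` fixes `y` and `α y` fixes `x`, so
`(α, b)` has `∑_{y ∈ Fix b} fix (α y)` fixed points. For fixed `b` the coordinates `α y` are
independent and uniform in `A`, so the proportion of `α` giving `k` fixed points is the
convolution `∑_{j₁+⋯+j_ℓ=k} ∏ δ_{j_r}(A)` with `ℓ = fix b`; averaging over `b ∈ B` groups
the elements of `B` by their number of fixed points. -/

section TupleCounting

variable {G : Type*} (w : G → ℕ)

theorem card_fin_tuples_sum_eq [Finite G] (ℓ k : ℕ) :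
    Nat.card {β : Fin ℓ → G // ∑ r, w (β r) = k} =
      ∑ j ∈ Nat.antidiagonalTuple ℓ k, ∏ r, Nat.card {a // w a = j r} := by
  classical
  have := Fintype.ofFinite G
  simp only [Nat.card_eq_fintype_card, Fintype.card_subtype]
  rw [card_eq_sum_card_fiberwise (f := fun β r => w (β r)) (t := Nat.antidiagonalTuple ℓ k)
    (fun β hβ => by simpa [Nat.mem_antidiagonalTuple] using hβ)]
  refine sum_congr rfl fun j hj => ?_
  rw [Nat.mem_antidiagonalTuple] at hj
  have hfiber : {β ∈ univ.filter fun β : Fin ℓ → G => ∑ r, w (β r) = k | (fun r => w (β r)) = j}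
      = Fintype.piFinset fun r => univ.filter fun a => w a = j r := by
    ext β
    simp only [mem_filter, mem_univ, true_and, Fintype.mem_piFinset, funext_iff]
    exact ⟨And.right, fun h => ⟨by simp [h, hj], h⟩⟩
  rw [hfiber, Fintype.card_piFinset]

theorem card_tuples_sum_eq [Finite G] {ι : Type*} [Fintype ι] (k : ℕ) :
    Nat.card {β : ι → G // ∑ i, w (β i) = k} =
      ∑ j ∈ Nat.antidiagonalTuple (Fintype.card ι) k, ∏ r, Nat.card {a // w a = j r} := by
  let e := Fintype.equivFin ι
  rw [← card_fin_tuples_sum_eq]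
  refine Nat.card_congr ((e.arrowCongr (Equiv.refl G)).subtypeEquiv fun β => ?_)
  rw [← Fintype.sum_equiv e (fun i => w (β i)) _ (fun i => by simp)]

theorem card_tuples_sum_subtype_eq {Y : Type*} [Fintype Y] (p : Y → Prop) [DecidablePred p]
    (k : ℕ) :
    Nat.card {α : Y → G // ∑ y : {y // p y}, w (α y) = k} =
      Nat.card {β : {y // p y} → G // ∑ y, w (β y) = k} *
        Nat.card G ^ Fintype.card {y // ¬p y} := by
  rw [← Nat.card_eq_fintype_card, ← Nat.card_fun, ← Nat.card_prod]
  exact Nat.card_congr (((Equiv.piEquivPiSubtypeProd p fun _ => G).subtypeEquiv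
    (q := fun f => ∑ y, w (f.1 y) = k) fun _ => Iff.rfl).trans
      (Equiv.prodSubtypeFstEquivSubtypeProd (p := fun β : {y // p y} → G => ∑ y, w (β y) = k)))

theorem card_tuples_sum_subtype_div [Finite G] [Nonempty G] {Y : Type*} [Fintype Y]
    (p : Y → Prop) [DecidablePred p] (k : ℕ) :
    (Nat.card {α : Y → G // ∑ y : {y // p y}, w (α y) = k} : ℝ) / Nat.card G ^ Fintype.card Y =
      ∑ j ∈ Nat.antidiagonalTuple (Fintype.card {y // p y}) k,
        ∏ r, (Nat.card {a // w a = j r} : ℝ) / Nat.card G := by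
  have hG : (Nat.card G : ℝ) ≠ 0 := Nat.cast_ne_zero.2 Nat.card_pos.ne'
  have hY : Fintype.card Y = Fintype.card {y // p y} + Fintype.card {y // ¬p y} := by
    rw [Fintype.card_subtype_compl, Nat.add_sub_cancel' (Fintype.card_subtype_le p)]
  rw [card_tuples_sum_subtype_eq, card_tuples_sum_eq, hY]
  push_cast
  rw [pow_add, mul_div_mul_right _ _ (pow_ne_zero _ hG), sum_div]
  simp only [prod_div_distrib, prod_const, card_univ, Fintype.card_fin]

end TupleCounting

section FixedPoints

variable {X Y : Type*}

theorem fixCnt_eq_natCard (g : Perm X) : fixCnt g = Nat.card {x // g x = x} :=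
  (Nat.card_coe_set_eq _).symm

theorem fixCnt_le_card [Fintype X] (g : Perm X) : fixCnt g ≤ Fintype.card X :=
  (fixCnt_eq_natCard g).trans_le ((Finite.card_subtype_le _).trans_eq Nat.card_eq_fintype_card)

theorem fixCnt_imprimPerm [Finite X] [Fintype Y] [DecidableEq Y] (α : Y → Perm X)
    (b : Perm Y) : fixCnt (imprimPerm α b) = ∑ y : {y // b y = y}, fixCnt (α y) := by
  simp only [fixCnt_eq_natCard]
  rw [← Nat.card_sigma]
  exact Nat.card_congr
    { toFun p := ⟨⟨p.1.2, (Prod.ext_iff.1 p.2).2⟩, ⟨p.1.1, (Prod.ext_iff.1 p.2).1⟩⟩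
      invFun s := ⟨(s.2.1, s.1.1), Prod.ext s.2.2 s.1.2⟩ }

theorem sum_comp_fixCnt_eq [Fintype Y] {H : Type*} [Fintype H] (f : H → Perm Y) (g : ℕ → ℝ) :
    ∑ h, g (fixCnt (f h)) =
      ∑ ℓ ∈ range (Fintype.card Y + 1), (Nat.card {h // fixCnt (f h) = ℓ} : ℝ) * g ℓ := by
  classical
  rw [← sum_fiberwise_of_maps_to (g := fun h => fixCnt (f h))
    (fun h _ => mem_range_succ_iff.2 (fixCnt_le_card (f h)))]
  refine sum_congr rfl fun ℓ _ => ?_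
  rw [sum_congr rfl fun h hh => by rw [(mem_filter.1 hh).2], sum_const, nsmul_eq_mul,
    Nat.card_eq_fintype_card, Fintype.card_subtype]

end FixedPoints

section WreathCounting

variable {X Y : Type*} (S : Set (Perm X)) (T : Set (Perm Y))

def wreathCarrier : Set ((Y → Perm X) × Perm Y) := {p | (∀ y, p.1 y ∈ S) ∧ p.2 ∈ T}

theorem propFix_eq_natCard_div (i : ℕ) :
    propFix S i = (Nat.card {a : S // fixCnt a.1 = i} : ℝ) / Nat.card S := by
  rw [propFix, propFixVia, ← Nat.card_coe_set_eq, ← Nat.card_coe_set_eq,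
    Nat.card_congr (Equiv.Set.sep S _)]
  rfl

theorem ncard_wreathCarrier : (wreathCarrier S T).ncard = Nat.card (T × (Y → S)) := by
  rw [← Nat.card_coe_set_eq]
  exact Nat.card_congr
    { toFun p := (⟨p.1.2, p.2.2⟩, fun y => ⟨p.1.1 y, p.2.1 y⟩)
      invFun q := ⟨(fun y => q.2 y, q.1), fun y => (q.2 y).2, q.1.2⟩ }

theorem ncard_sep_wreathCarrier (P : (Y → Perm X) × Perm Y → Prop) :
    {p ∈ wreathCarrier S T | P p}.ncard =
      Nat.card (Σ b : T, {α : Y → S // P (fun y => α y, b)}) := by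
  rw [← Nat.card_coe_set_eq]
  exact Nat.card_congr
    { toFun p := ⟨⟨p.1.2, p.2.1.2⟩, fun y => ⟨p.1.1 y, p.2.1.1 y⟩, p.2.2⟩
      invFun s := ⟨(fun y => s.2.1 y, s.1), ⟨fun y => (s.2.1 y).2, s.1.2⟩, s.2.2⟩ }

theorem propFixVia_imprimPerm [Fintype X] [Fintype Y] [DecidableEq Y] (hS : S.Nonempty)
    (k : ℕ) :
    propFixVia (fun p => imprimPerm p.1 p.2) (wreathCarrier S T) k =
      ∑ ℓ ∈ range (Fintype.card Y + 1), propFix T ℓ *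
        ∑ j ∈ Nat.antidiagonalTuple ℓ k, ∏ r, propFix S (j r) := by
  classical
  have : Nonempty S := hS.to_subtype
  set Q : ℕ → ℝ := fun ℓ => ∑ j ∈ Nat.antidiagonalTuple ℓ k, ∏ r, propFix S (j r)
  have hfiber (b : Perm Y) :
      (Nat.card {α : Y → S // fixCnt (imprimPerm (fun y => (α y).1) b) = k} : ℝ) /
        Nat.card S ^ Fintype.card Y = Q (fixCnt b) := by
    simp only [fixCnt_imprimPerm]
    rw [card_tuples_sum_subtype_div (fun a : S => fixCnt a.1), fixCnt_eq_natCard b,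
      Nat.card_eq_fintype_card (α := {y // b y = y})]
    simp only [Q, propFix_eq_natCard_div]
  rw [propFixVia, ncard_sep_wreathCarrier, ncard_wreathCarrier, Nat.card_sigma, Nat.card_prod,
    Nat.card_fun, Nat.card_eq_fintype_card (α := Y)]
  push_cast
  rw [mul_comm, ← div_div, sum_div]
  simp only [hfiber]
  rw [sum_comp_fixCnt_eq (fun b : T => b.1) Q, sum_div]
  refine sum_congr rfl fun ℓ _ => ?_
  rw [propFix_eq_natCard_div T, div_mul_eq_mul_div]

end WreathCounting

theorem deltaK_imprimitive_wreath_general (m n : ℕ)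
    (A : Subgroup (Equiv.Perm (Fin m))) (B : Subgroup (Equiv.Perm (Fin n))) (k : ℕ) :
    deltaI A B k =
      ∑ ℓ ∈ Finset.range (n + 1), propFix (B : Set (Equiv.Perm (Fin n))) ℓ *
        ∑ j ∈ Finset.Nat.antidiagonalTuple ℓ k,
          ∏ r : Fin ℓ, propFix (A : Set (Equiv.Perm (Fin m))) (j r) := by
  have h := propFixVia_imprimPerm (A : Set (Perm (Fin m))) (B : Set (Perm (Fin n)))
    ⟨1, A.one_mem⟩ k
  rwa [Fintype.card_fin] at h

/-- **Theorem (imprimitive wreath product, `δ_k` formula).**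
For `m, n ≥ 2`, `A ≤ S_m`, `B ≤ S_n` and every `k`,
`δ_k(A ≀_I B) = ∑_{ℓ=0}^n δ_ℓ(B) ∑_{j₁+⋯+j_ℓ=k} ∏_{r=1}^ℓ δ_{j_r}(A)`. -/
theorem deltaK_imprimitive_wreath (m n : ℕ) (hm : 2 ≤ m) (hn : 2 ≤ n)
    (A : Subgroup (Equiv.Perm (Fin m))) (B : Subgroup (Equiv.Perm (Fin n))) (k : ℕ) :
    deltaI A B k =
      ∑ ℓ ∈ Finset.range (n + 1), propFix (B : Set (Equiv.Perm (Fin n))) ℓ *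
        ∑ j ∈ Finset.Nat.antidiagonalTuple ℓ k,
          ∏ r : Fin ℓ, propFix (A : Set (Equiv.Perm (Fin m))) (j r) :=
  deltaK_imprimitive_wreath_general m n A B k
end

section
/- Let m,n ≥ 2, A ≤ S_m and B ≤ S_n. The proportion of derangements of the imprimitive wreath product A≀_I B on [m]×[n] satisfies δ(A≀_I B) = ∑_{ℓ=0}^{n} δ_ℓ(B) · δ(A)^ℓ. -/
open Equiv Finset

/-!
A pair `(α, b)` fixes `(x, y)` exactly when `b` fixes `y` and `α y` fixes `x`, so `(α, b)` is a
derangement iff `α y` is a derangement at every fixed point `y` of `b`. For fixed `b` the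
coordinates `α y ∈ A` are chosen independently, so the proportion of such `α` is
`δ(A) ^ fixCnt b`; averaging over `b ∈ B` gives `∑ₗ δₗ(B) δ(A)ˡ`.
-/

lemma Fintype.card_filter_piFinset_forall_imp {Y β : Type*} [Fintype Y] [DecidableEq Y]
    (s : Finset β) (p : Y → Prop) [DecidablePred p] (q : β → Prop) [DecidablePred q] :
    #{f ∈ Fintype.piFinset fun _ : Y => s | ∀ y, p y → q (f y)} =
      #{b ∈ s | q b} ^ #{y | p y} * #s ^ #{y | ¬ p y} := by
  have hpi : {f ∈ Fintype.piFinset fun _ : Y => s | ∀ y, p y → q (f y)} =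
      Fintype.piFinset fun y => if p y then {b ∈ s | q b} else s := by
    ext f
    simp only [mem_filter, Fintype.mem_piFinset, ← forall_and]
    exact forall_congr' fun y => by split_ifs with hy <;> simp [hy]
  rw [hpi, Fintype.card_piFinset, prod_apply_ite, prod_const, prod_const]

namespace Equiv.Perm

variable {X Y : Type*}

lemma propFixVia_coe_finset {α : Type*} (f : α → Perm X) (C : Finset α) (k : ℕ) :
    propFixVia f ↑C k = (#{a ∈ C | fixCnt (f a) = k} : ℝ) / #C := by
  rw [propFixVia, ← Set.ncard_coe_finset, ← Set.ncard_coe_finset, coe_filter]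
  rfl

lemma propFix_coe_finset (C : Finset (Perm X)) (k : ℕ) :
    propFix (↑C : Set (Perm X)) k = (#{g ∈ C | fixCnt g = k} : ℝ) / #C :=
  propFixVia_coe_finset id C k

lemma fixCnt_eq_card_filter [Fintype X] [DecidableEq X] (g : Perm X) :
    fixCnt g = #{x | g x = x} := by
  rw [fixCnt, ← Set.ncard_coe_finset, coe_filter_univ]

lemma fixCnt_le_card [Fintype X] (g : Perm X) : fixCnt g ≤ Fintype.card X := by
  classical
  rw [fixCnt_eq_card_filter]
  exact card_filter_le _ _

lemma fixCnt_eq_zero_iff [Finite X] (g : Perm X) : fixCnt g = 0 ↔ ∀ x, g x ≠ x := by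
  rw [fixCnt, Set.ncard_eq_zero, Set.eq_empty_iff_forall_notMem]
  rfl

lemma fixCnt_imprimPerm_eq_zero_iff [Finite X] [Finite Y] (α : Y → Perm X) (b : Perm Y) :
    fixCnt (imprimPerm α b) = 0 ↔ ∀ y, b y = y → fixCnt (α y) = 0 := by
  simp only [fixCnt_eq_zero_iff, Prod.forall]
  exact ⟨fun h y hy x hx => h x y (Prod.ext hx hy),
    fun h x y hxy => h y (congrArg Prod.snd hxy) x (congrArg Prod.fst hxy)⟩

lemma sum_propFix_mul_pow [Fintype X] (C : Finset (Perm X)) (x : ℝ) :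
    ∑ ℓ ∈ range (Fintype.card X + 1), propFix (↑C : Set (Perm X)) ℓ * x ^ ℓ =
      (∑ g ∈ C, x ^ fixCnt g) / #C := by
  have hmaps : ∀ g ∈ C, fixCnt g ∈ range (Fintype.card X + 1) := fun g _ =>
    mem_range.2 (Nat.lt_succ_of_le (fixCnt_le_card g))
  rw [← sum_fiberwise_of_maps_to' hmaps, sum_div]
  refine sum_congr rfl fun ℓ _ => ?_
  rw [propFix_coe_finset, sum_const, nsmul_eq_mul]
  ring

variable [Fintype X] [Fintype Y] [DecidableEq Y]

lemma card_filter_imprimPerm_fixCnt_eq_zero (A : Finset (Perm X)) (B : Finset (Perm Y)) :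
    #{p ∈ Fintype.piFinset (fun _ : Y => A) ×ˢ B | fixCnt (imprimPerm p.1 p.2) = 0} =
      ∑ b ∈ B, #{a ∈ A | fixCnt a = 0} ^ fixCnt b * #A ^ #{y | b y ≠ y} := by
  rw [card_filter, sum_product_right]
  refine sum_congr rfl fun b _ => ?_
  simp only [← card_filter, fixCnt_imprimPerm_eq_zero_iff]
  convert Fintype.card_filter_piFinset_forall_imp A (fun y => b y = y) (fixCnt · = 0) using 3
  rw [fixCnt_eq_card_filter]

theorem propFixVia_imprimPerm_zero (A : Finset (Perm X)) (hA : A.Nonempty) (B : Finset (Perm Y)) :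
    propFixVia (fun p : (Y → Perm X) × Perm Y => imprimPerm p.1 p.2)
        ↑(Fintype.piFinset (fun _ : Y => A) ×ˢ B) 0 =
      ∑ ℓ ∈ range (Fintype.card Y + 1), propFix (↑B : Set (Perm Y)) ℓ *
        propFix (↑A : Set (Perm X)) 0 ^ ℓ := by
  rw [sum_propFix_mul_pow, propFixVia_coe_finset, card_filter_imprimPerm_fixCnt_eq_zero,
    card_product, Fintype.card_piFinset, prod_const, card_univ, propFix_coe_finset]
  push_cast
  rw [sum_div, sum_div]
  refine sum_congr rfl fun b _ => ?_
  have hA' : (#A : ℝ) ≠ 0 := by exact_mod_cast hA.card_pos.ne'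
  have hsplit : Fintype.card Y = fixCnt b + #{y | b y ≠ y} := by
    rw [fixCnt_eq_card_filter, card_filter_add_card_filter_not, card_univ]
  rw [hsplit, pow_add, div_pow]
  field_simp

end Equiv.Perm

theorem delta_imprimitive_wreath_general (m n : ℕ)
    (A : Subgroup (Equiv.Perm (Fin m))) (B : Subgroup (Equiv.Perm (Fin n))) :
    deltaI A B 0 =
      ∑ ℓ ∈ Finset.range (n + 1), propFix (B : Set (Equiv.Perm (Fin n))) ℓ *
        (propFix (A : Set (Equiv.Perm (Fin m))) 0) ^ ℓ := by
  classical
  have hW : wreathSet A B = ↑(Fintype.piFinset (fun _ : Fin n => (A : Set (Perm (Fin m))).toFinset)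
      ×ˢ (B : Set (Perm (Fin n))).toFinset) := by
    ext p
    simp [wreathSet]
  rw [deltaI, hW, Perm.propFixVia_imprimPerm_zero _ ⟨1, by simp [A.one_mem]⟩, Set.coe_toFinset,
    Set.coe_toFinset, Fintype.card_fin]

/-- **Theorem (imprimitive wreath product, derangement formula).**
For `m, n ≥ 2`, `A ≤ S_m`, `B ≤ S_n`,
`δ(A ≀_I B) = ∑_{ℓ=0}^n δ_ℓ(B) δ(A)^ℓ`. -/
theorem delta_imprimitive_wreath (m n : ℕ) (hm : 2 ≤ m) (hn : 2 ≤ n)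
    (A : Subgroup (Equiv.Perm (Fin m))) (B : Subgroup (Equiv.Perm (Fin n))) :
    deltaI A B 0 =
      ∑ ℓ ∈ Finset.range (n + 1), propFix (B : Set (Equiv.Perm (Fin n))) ℓ *
        (propFix (A : Set (Equiv.Perm (Fin m))) 0) ^ ℓ :=
  delta_imprimitive_wreath_general m n A B
end

section
/- Let n ≥ 2, t ∈ [n], and let G ≤ S_n act sharply t-transitively on [n]. Then δ_n(G) = 1/|G|; δ_k(G) = 0 for all k with t ≤ k < n; and for 0 ≤ k < t, δ_k(G) = (1/k!) ∑_{j=0}^{t−k−1} (−1)^j/j! + ((n−t)!/k!) ∑_{j=t−k}^{n−k} (−1)^j / ((n−k−j)! · j!). -/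
open Equiv Finset

/-!
Sharp `t`-transitivity makes `G` act regularly on `t`-tuples of distinct points, so
`|G| = n^(t)` (falling factorial) and only the identity fixes `t` or more points. Burnside's
lemma for the action on `s`-tuples of distinct points shows that the falling-factorial moments
`∑_g fix(g)^(s)` all equal `|G|` for `s ≤ t`, while for `s ≥ t` only the identity contributes,
giving `n^(s)`. The number of elements with exactly `k` fixed points is recovered from these
moments by binomial inversion, `[m = k] = ∑_j (-1)^j m^(k+j) / (k! j!)`.
-/

open MulAction
open scoped Nat

section FixedEmbeddings

variable {G α : Type*} [Group G] [MulAction G α]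

def fixedByEmbeddingEquiv (s : ℕ) (g : G) :
    fixedBy (Fin s ↪ α) g ≃ (Fin s ↪ fixedBy α g) where
  toFun x := ⟨fun i => ⟨x.1 i, by simpa using congrArg (· i) x.2⟩,
    fun i j hij => x.1.injective (congrArg Subtype.val hij)⟩
  invFun y := ⟨y.trans (Function.Embedding.subtype _), by ext i; exact (y i).2⟩
  left_inv x := rfl
  right_inv y := rfl

theorem card_fixedBy_embedding [Finite α] (s : ℕ) (g : G) :
    Nat.card (fixedBy (Fin s ↪ α) g) = (Nat.card (fixedBy α g)).descFactorial s := by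
  classical
  have := Fintype.ofFinite α
  rw [Nat.card_congr (fixedByEmbeddingEquiv s g), Nat.card_eq_fintype_card,
    Fintype.card_embedding_eq, Fintype.card_fin, Nat.card_eq_fintype_card]

theorem sum_descFactorial_card_fixedBy_of_isMultiplyPretransitive [Fintype G] [Finite α]
    {s : ℕ} [IsMultiplyPretransitive G α s] (hs : s ≤ Nat.card α) :
    ∑ g : G, (Nat.card (fixedBy α g)).descFactorial s = Nat.card G := by
  have := Fintype.ofFinite α
  have : Nonempty (Fin s ↪ α) := Function.Embedding.nonempty_of_card_le (by simpa using hs)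
  have : Unique (orbitRel.Quotient G (Fin s ↪ α)) :=
    ((pretransitive_iff_unique_quotient_of_nonempty G _).mp inferInstance).some
  classical
  simp_rw [← card_fixedBy_embedding, Nat.card_eq_fintype_card]
  rw [sum_card_fixedBy_eq_card_orbits_mul_card_group, Fintype.card_unique, one_mul]

end FixedEmbeddings

section SharplyTransitive

variable (G α : Type*) [Group G] [MulAction G α]

def IsSharplyMultiplyTransitive (t : ℕ) : Prop :=
  ∀ x y : Fin t ↪ α, ∃! g : G, g • x = y

variable {G α} {t : ℕ}

namespace IsSharplyMultiplyTransitive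

theorem isMultiplyPretransitive (h : IsSharplyMultiplyTransitive G α t) :
    IsMultiplyPretransitive G α t :=
  ⟨fun x y => (h x y).exists⟩

theorem eq_one_of_le_card_fixedBy [Finite α] (h : IsSharplyMultiplyTransitive G α t) {g : G}
    (hg : t ≤ Nat.card (fixedBy α g)) : g = 1 := by
  have := Fintype.ofFinite (fixedBy α g)
  obtain ⟨x⟩ : Nonempty (Fin t ↪ fixedBy α g) :=
    Function.Embedding.nonempty_of_card_le (by simpa [Nat.card_eq_fintype_card] using hg)
  have hx : g • x.trans (Function.Embedding.subtype _) = x.trans (Function.Embedding.subtype _) :=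
    ((fixedByEmbeddingEquiv t g).symm x).2
  exact (h _ _).unique hx (one_smul G _)

theorem sum_descFactorial_card_fixedBy_eq_descFactorial [Fintype G] [Finite α]
    (h : IsSharplyMultiplyTransitive G α t) {s : ℕ} (hts : t ≤ s) :
    ∑ g : G, (Nat.card (fixedBy α g)).descFactorial s = (Nat.card α).descFactorial s := by
  rw [Fintype.sum_eq_single 1 fun g hg => Nat.descFactorial_eq_zero_iff_lt.mpr ?_]
  · simp
  · by_contra! hsg
    exact hg (h.eq_one_of_le_card_fixedBy (hts.trans hsg))

theorem card_eq_descFactorial [Fintype G] [Finite α] (h : IsSharplyMultiplyTransitive G α t)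
    (ht : t ≤ Nat.card α) : Nat.card G = (Nat.card α).descFactorial t := by
  have := h.isMultiplyPretransitive
  exact (sum_descFactorial_card_fixedBy_of_isMultiplyPretransitive ht).symm.trans
    (h.sum_descFactorial_card_fixedBy_eq_descFactorial le_rfl)

theorem sum_descFactorial_card_fixedBy_eq_card [Fintype G] [Finite α]
    (h : IsSharplyMultiplyTransitive G α t) {s : ℕ} (hst : s ≤ t) (ht : t ≤ Nat.card α) :
    ∑ g : G, (Nat.card (fixedBy α g)).descFactorial s = Nat.card G := by
  have := h.isMultiplyPretransitive
  have := isMultiplyPretransitive_of_le (G := G) hst ht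
  exact sum_descFactorial_card_fixedBy_of_isMultiplyPretransitive (hst.trans ht)

theorem card_filter_card_fixedBy_eq_of_le [Fintype G] [Finite α]
    (h : IsSharplyMultiplyTransitive G α t) {k : ℕ} (htk : t ≤ k) :
    #{g : G | Nat.card (fixedBy α g) = k} = if k = Nat.card α then 1 else 0 := by
  rw [card_eq_sum_ones, sum_filter, Fintype.sum_eq_single 1 fun g hg =>
    if_neg fun (hgk : Nat.card (fixedBy α g) = k) =>
      hg (h.eq_one_of_le_card_fixedBy (hgk ▸ htk))]
  simp [eq_comm]

end IsSharplyMultiplyTransitive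

end SharplyTransitive

theorem sum_range_neg_one_pow_mul_choose_of_le {m N : ℕ} (hm : m ≤ N) :
    ∑ j ∈ range (N + 1), (-1 : ℝ) ^ j * m.choose j = if m = 0 then 1 else 0 := by
  rw [← sum_subset (range_subset_range.mpr (Nat.succ_le_succ hm)) fun j _ hj => by
    rw [Nat.choose_eq_zero_of_lt (by simpa using hj), Nat.cast_zero, mul_zero]]
  exact_mod_cast Int.alternating_sum_range_choose

theorem sum_range_neg_one_pow_mul_descFactorial {m N : ℕ} (k : ℕ) (hm : m ≤ N) :
    ∑ j ∈ range (N - k + 1), (-1 : ℝ) ^ j * m.descFactorial (k + j) / (k ! * j !) =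
      if m = k then 1 else 0 := by
  have hterm : ∀ j, (-1 : ℝ) ^ j * m.descFactorial (k + j) / (k ! * j !) =
      m.choose k * ((-1) ^ j * (m - k).choose j) := by
    intro j
    rw [← Nat.descFactorial_mul_descFactorial (Nat.le_add_right k j), Nat.add_sub_cancel_left,
      Nat.descFactorial_eq_factorial_mul_choose, Nat.descFactorial_eq_factorial_mul_choose]
    push_cast
    field_simp
  simp_rw [hterm, ← mul_sum]
  rcases lt_or_ge m k with hmk | hkm
  · simp [Nat.choose_eq_zero_of_lt hmk, hmk.ne]
  · rw [sum_range_neg_one_pow_mul_choose_of_le (by omega)]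
    rcases hkm.eq_or_lt with rfl | hkm
    · simp
    · simp [hkm.ne', Nat.sub_eq_zero_iff_le, hkm.not_ge]

theorem card_filter_eq_sum_descFactorial {ι : Type*} [Fintype ι] (f : ι → ℕ) {N : ℕ}
    (hf : ∀ i, f i ≤ N) (k : ℕ) :
    (#{i | f i = k} : ℝ) = ∑ j ∈ range (N - k + 1),
      (-1 : ℝ) ^ j * (∑ i, (f i).descFactorial (k + j) : ℕ) / (k ! * j !) := by
  simp_rw [Nat.cast_sum, mul_sum, sum_div]
  rw [sum_comm, card_filter]
  push_cast
  exact sum_congr rfl fun i _ => (sum_range_neg_one_pow_mul_descFactorial k (hf i)).symm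

theorem Nat.cast_descFactorial_div_descFactorial {n s t : ℕ} (hs : s ≤ n) (ht : t ≤ n) :
    (n.descFactorial s : ℝ) / n.descFactorial t = (n - t)! / (n - s)! := by
  rw [div_eq_div_iff (by exact_mod_cast (Nat.descFactorial_pos.mpr ht).ne') (by positivity)]
  norm_cast
  rw [mul_comm, Nat.factorial_mul_descFactorial hs, Nat.factorial_mul_descFactorial ht]

theorem propFix_coe_subgroup {α : Type*} (G : Subgroup (Perm α)) [Fintype G] (k : ℕ) :
    propFix (G : Set (Perm α)) k =
      (#{g : G | Nat.card (fixedBy α g) = k} : ℝ) / Nat.card G := by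
  rw [propFix, propFixVia, ← Nat.card_coe_set_eq, ← Nat.card_coe_set_eq, SetLike.coe_sort_coe,
    ← Fintype.card_subtype, ← Nat.card_eq_fintype_card]
  congr 2
  exact Nat.card_congr
    { toFun a := ⟨⟨a.1, a.2.1⟩, a.2.2⟩
      invFun g := ⟨g.1.1, g.1.2, g.2⟩ }

theorem deltaK_sharply_transitive_general (n t : ℕ) (htn : t ≤ n)
    (G : Subgroup (Equiv.Perm (Fin n)))
    (hsharp : ∀ x y : Fin t ↪ Fin n,
      ∃! g : G, ∀ i : Fin t, (g : Equiv.Perm (Fin n)) (x i) = y i) :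
    propFix (G : Set (Equiv.Perm (Fin n))) n = 1 / (Nat.card G : ℝ) ∧
    (∀ k : ℕ, t ≤ k → k < n → propFix (G : Set (Equiv.Perm (Fin n))) k = 0) ∧
    (∀ k : ℕ, k < t →
      propFix (G : Set (Equiv.Perm (Fin n))) k =
        (1 / (Nat.factorial k : ℝ)) *
          (∑ j ∈ Finset.range (t - k), (-1 : ℝ) ^ j / (Nat.factorial j : ℝ)) +
        ((Nat.factorial (n - t) : ℝ) / (Nat.factorial k : ℝ)) *
          (∑ j ∈ Finset.Icc (t - k) (n - k),
            (-1 : ℝ) ^ j /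
              ((Nat.factorial (n - k - j) : ℝ) * (Nat.factorial j : ℝ)))) := by
  have := Fintype.ofFinite G
  have hG : IsSharplyMultiplyTransitive G (Fin n) t := fun x y =>
    (existsUnique_congr fun g => by
      simp only [Function.Embedding.ext_iff, Function.Embedding.smul_apply]; rfl).mp (hsharp x y)
  have htn' : t ≤ Nat.card (Fin n) := by rwa [Nat.card_fin]
  have hcard : Nat.card G = n.descFactorial t := by rw [hG.card_eq_descFactorial htn', Nat.card_fin]
  refine ⟨?_, fun k htk hkn => ?_, fun k hkt => ?_⟩
  · rw [propFix_coe_subgroup, hG.card_filter_card_fixedBy_eq_of_le htn,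
      if_pos (Nat.card_fin n).symm, Nat.cast_one]
  · rw [propFix_coe_subgroup, hG.card_filter_card_fixedBy_eq_of_le htk,
      if_neg (by rw [Nat.card_fin]; omega), Nat.cast_zero, zero_div]
  have hfix_le (g : G) : Nat.card (fixedBy (Fin n) g) ≤ n :=
    (Finite.card_subtype_le _).trans_eq (Nat.card_fin n)
  rw [propFix_coe_subgroup, card_filter_eq_sum_descFactorial _ hfix_le k, sum_div,
    ← sum_range_add_sum_Ico _ (show t - k ≤ n - k + 1 by omega), Ico_add_one_right_eq_Icc,
    mul_sum, mul_sum]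
  congr 1 <;> refine sum_congr rfl fun j hj => ?_
  · rw [hG.sum_descFactorial_card_fixedBy_eq_card (by simp at hj; omega) htn']
    have : (Nat.card G : ℝ) ≠ 0 := Nat.cast_ne_zero.mpr Nat.card_pos.ne'
    field_simp
  · obtain ⟨hj₁, hj₂⟩ := mem_Icc.mp hj
    rw [hG.sum_descFactorial_card_fixedBy_eq_descFactorial (by omega), hcard, Nat.card_fin,
      div_right_comm, mul_div_assoc, Nat.cast_descFactorial_div_descFactorial (by omega) htn,
      Nat.sub_sub]
    field_simp

/-- **Theorem (sharply `t`-transitive groups).**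
Let `n ≥ 2`, `1 ≤ t ≤ n` and let `G ≤ S_n` be sharply `t`-transitive, i.e. for any
two `t`-tuples of pairwise distinct points there is exactly one element of `G`
carrying the first to the second.  Then `δ_n(G) = 1/|G|`, `δ_k(G) = 0` for
`t ≤ k < n`, and for `k < t`,
`δ_k(G) = (1/k!) ∑_{j=0}^{t-k-1} (-1)^j/j!
          + ((n-t)!/k!) ∑_{j=t-k}^{n-k} (-1)^j/((n-k-j)! j!)`. -/
theorem deltaK_sharply_transitive (n t : ℕ) (hn : 2 ≤ n) (ht1 : 1 ≤ t) (htn : t ≤ n)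
    (G : Subgroup (Equiv.Perm (Fin n)))
    (hsharp : ∀ x y : Fin t ↪ Fin n,
      ∃! g : G, ∀ i : Fin t, (g : Equiv.Perm (Fin n)) (x i) = y i) :
    propFix (G : Set (Equiv.Perm (Fin n))) n = 1 / (Nat.card G : ℝ) ∧
    (∀ k : ℕ, t ≤ k → k < n → propFix (G : Set (Equiv.Perm (Fin n))) k = 0) ∧
    (∀ k : ℕ, k < t →
      propFix (G : Set (Equiv.Perm (Fin n))) k =
        (1 / (Nat.factorial k : ℝ)) *
          (∑ j ∈ Finset.range (t - k), (-1 : ℝ) ^ j / (Nat.factorial j : ℝ)) +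
        ((Nat.factorial (n - t) : ℝ) / (Nat.factorial k : ℝ)) *
          (∑ j ∈ Finset.Icc (t - k) (n - k),
            (-1 : ℝ) ^ j /
              ((Nat.factorial (n - k - j) : ℝ) * (Nat.factorial j : ℝ)))) :=
  deltaK_sharply_transitive_general n t htn G hsharp
end

section
/- Let B ≤ S_n and let 𝒫_B(x) = ∑_{ℓ=0}^{n} δ_ℓ(B) x^ℓ. Then 𝒫_B is convex on [0,1]. Moreover, if B acts transitively on [n], then 0 ≤ 𝒫_B(x) − x ≤ 𝒫_B(0) for all x ∈ [0,1]. -/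
open Equiv Finset

private lemma fixCnt_le {n : ℕ} (g : Equiv.Perm (Fin n)) : fixCnt g ≤ n := by
  have h : {x | g x = x}.ncard ≤ (Set.univ : Set (Fin n)).ncard :=
    Set.ncard_le_ncard (Set.subset_univ _) Set.finite_univ
  simpa [fixCnt, Set.ncard_univ] using h

private lemma sum_counts {n : ℕ} (B : Subgroup (Equiv.Perm (Fin n))) :
    ∑ ℓ ∈ Finset.range (n+1),
      ({a ∈ (B : Set (Equiv.Perm (Fin n))) | fixCnt a = ℓ}).ncard
      = (B : Set (Equiv.Perm (Fin n))).ncard := by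
  classical
  have hfin : ∀ ℓ : ℕ, ({a ∈ (B : Set (Equiv.Perm (Fin n))) | fixCnt a = ℓ}).ncard
      = ((B : Set (Equiv.Perm (Fin n))).toFinset.filter (fun a => fixCnt a = ℓ)).card := by
    intro ℓ
    rw [Set.ncard_eq_toFinset_card']
    congr 1
    ext a
    simp [Set.mem_toFinset]
  simp_rw [hfin, Set.ncard_eq_toFinset_card']
  exact (Finset.card_eq_sum_card_fiberwise (fun a _ =>
    Finset.mem_range.mpr (Nat.lt_succ_of_le (fixCnt_le a)))).symm

private lemma burnside {n : ℕ} (B : Subgroup (Equiv.Perm (Fin n))) [Nonempty (Fin n)]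
    (ht : MulAction.IsPretransitive B (Fin n)) :
    ∑ ℓ ∈ Finset.range (n+1),
      ℓ * ({a ∈ (B : Set (Equiv.Perm (Fin n))) | fixCnt a = ℓ}).ncard
      = (B : Set (Equiv.Perm (Fin n))).ncard := by
  classical
  haveI := ht
  have hΩ : Fintype.card (Quotient (MulAction.orbitRel B (Fin n))) = 1 := by
    have hsub : ∀ q q' : Quotient (MulAction.orbitRel B (Fin n)), q = q' := by
      rintro ⟨x⟩ ⟨y⟩
      exact Quotient.sound (by
        change x ∈ MulAction.orbit B y
        rw [MulAction.orbit_eq_univ]; trivial)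
    have q : Quotient (MulAction.orbitRel B (Fin n)) := ⟦Classical.arbitrary (Fin n)⟧
    exact Fintype.card_eq_one_iff.mpr ⟨q, fun q' => hsub q' q⟩
  have hburn := MulAction.sum_card_fixedBy_eq_card_orbits_mul_card_group B (Fin n)
  rw [hΩ, one_mul] at hburn
  have hfix : ∀ a : B, fixCnt (a : Equiv.Perm (Fin n))
      = Fintype.card (MulAction.fixedBy (Fin n) a) := by
    intro a
    have hset : {x : Fin n | (a : Equiv.Perm (Fin n)) x = x} = MulAction.fixedBy (Fin n) a := by
      rfl
    rw [fixCnt, hset, Set.ncard_eq_toFinset_card', Set.toFinset_card]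
  have hfin : ∀ ℓ : ℕ, ({a ∈ (B : Set (Equiv.Perm (Fin n))) | fixCnt a = ℓ}).ncard
      = ((B : Set (Equiv.Perm (Fin n))).toFinset.filter (fun a => fixCnt a = ℓ)).card := by
    intro ℓ
    rw [Set.ncard_eq_toFinset_card']
    congr 1
    ext a
    simp [Set.mem_toFinset]
  simp_rw [hfin]
  have h1 : ∑ ℓ ∈ Finset.range (n+1),
      ℓ * ((B : Set (Equiv.Perm (Fin n))).toFinset.filter (fun a => fixCnt a = ℓ)).card
      = ∑ b ∈ (B : Set (Equiv.Perm (Fin n))).toFinset, fixCnt b := by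
    rw [← Finset.sum_fiberwise_of_maps_to (g := fixCnt) (t := Finset.range (n+1))
      (fun a _ => Finset.mem_range.mpr (Nat.lt_succ_of_le (fixCnt_le a)))]
    refine Finset.sum_congr rfl fun ℓ _ => ?_
    rw [Finset.sum_congr rfl (fun b hb => (Finset.mem_filter.mp hb).2),
      Finset.sum_const, smul_eq_mul, mul_comm]
  have h2 : ∑ b ∈ (B : Set (Equiv.Perm (Fin n))).toFinset, fixCnt b
      = ∑ a : B, fixCnt (a : Equiv.Perm (Fin n)) := by
    exact Finset.sum_subtype _ (fun x => by simp [Set.mem_toFinset]) _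
  have h3 : (B : Set (Equiv.Perm (Fin n))).ncard = Fintype.card B := by
    rw [Set.ncard_eq_toFinset_card', Set.toFinset_card]
    exact Fintype.card_congr (Equiv.refl _)
  rw [h1, h2, h3, ← hburn]
  exact Finset.sum_congr rfl fun a _ => hfix a


/-- **Lemma (convexity of the fixed-point generating polynomial).**
For `B ≤ S_n`, the polynomial `𝒫_B(x) = ∑_{ℓ=0}^n δ_ℓ(B) x^ℓ` is convex on `[0,1]`,
and if `B` is transitive on `[n]`, then `0 ≤ 𝒫_B(x) - x ≤ 𝒫_B(0)` for `x ∈ [0,1]`. -/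
theorem convexOn_fixedPoint_polynomial (n : ℕ) (B : Subgroup (Equiv.Perm (Fin n))) :
    ConvexOn ℝ (Set.Icc (0 : ℝ) 1)
      (fun x : ℝ => ∑ ℓ ∈ Finset.range (n + 1),
        propFix (B : Set (Equiv.Perm (Fin n))) ℓ * x ^ ℓ) ∧
    (MulAction.IsPretransitive B (Fin n) →
      ∀ x ∈ Set.Icc (0 : ℝ) 1,
        0 ≤ (∑ ℓ ∈ Finset.range (n + 1),
              propFix (B : Set (Equiv.Perm (Fin n))) ℓ * x ^ ℓ) - x ∧
        (∑ ℓ ∈ Finset.range (n + 1),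
              propFix (B : Set (Equiv.Perm (Fin n))) ℓ * x ^ ℓ) - x ≤
          ∑ ℓ ∈ Finset.range (n + 1),
            propFix (B : Set (Equiv.Perm (Fin n))) ℓ * (0 : ℝ) ^ ℓ) := by
  classical
  set S : Set (Equiv.Perm (Fin n)) := (B : Set (Equiv.Perm (Fin n))) with hSdef
  have hSpos : (0 : ℝ) < (S.ncard : ℝ) :=
    Nat.cast_pos.mpr ((Set.ncard_pos S.toFinite).mpr ⟨1, B.one_mem⟩)
  have hδ : ∀ ℓ, propFix S ℓ = (({a ∈ S | fixCnt a = ℓ}).ncard : ℝ) / (S.ncard : ℝ) :=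
    fun ℓ => rfl
  have hδnn : ∀ ℓ, 0 ≤ propFix S ℓ := fun ℓ => by
    rw [hδ]; exact div_nonneg (Nat.cast_nonneg _) (Nat.cast_nonneg _)
  have hsum1 : ∑ ℓ ∈ Finset.range (n + 1), propFix S ℓ = 1 := by
    simp_rw [hδ]
    rw [← Finset.sum_div, div_eq_one_iff_eq (ne_of_gt hSpos)]
    rw [hSdef]
    exact_mod_cast sum_counts B
  constructor
  · -- convexity
    have hconv : ∀ s : Finset ℕ,
        ConvexOn ℝ (Set.Icc (0:ℝ) 1) (fun x => ∑ ℓ ∈ s, propFix S ℓ * x ^ ℓ) := by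
      intro s
      induction s using Finset.induction_on with
      | empty => simpa using convexOn_const (0:ℝ) (convex_Icc (0:ℝ) 1)
      | @insert ℓ s hℓ ih =>
        simp_rw [Finset.sum_insert hℓ]
        have h1 : ConvexOn ℝ (Set.Icc (0:ℝ) 1) (fun x : ℝ => x ^ ℓ) :=
          (convexOn_pow ℓ).subset (fun x hx => hx.1) (convex_Icc _ _)
        exact (h1.smul (hδnn ℓ)).add ih
    exact hconv _
  · intro ht x hx
    obtain ⟨hx0, hx1⟩ := hx
    rcases Nat.eq_zero_or_pos n with hn | hn
    · subst hn
      simp only [zero_add, Finset.sum_range_one, pow_zero, mul_one] at hsum1 ⊢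
      rw [hsum1]
      constructor <;> linarith
    · haveI : Nonempty (Fin n) := ⟨⟨0, hn⟩⟩
      have hsum2 : ∑ ℓ ∈ Finset.range (n + 1), (ℓ:ℝ) * propFix S ℓ = 1 := by
        simp_rw [hδ, mul_div_assoc']
        rw [← Finset.sum_div, div_eq_one_iff_eq (ne_of_gt hSpos)]
        rw [hSdef]
        exact_mod_cast burnside B ht
      constructor
      · have key1 : ∑ ℓ ∈ Finset.range (n + 1), propFix S ℓ * (1 + (ℓ:ℝ) * (x - 1)) = x := by
          calc ∑ ℓ ∈ Finset.range (n + 1), propFix S ℓ * (1 + (ℓ:ℝ) * (x - 1))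
              = ∑ ℓ ∈ Finset.range (n + 1),
                  (propFix S ℓ + (x - 1) * ((ℓ:ℝ) * propFix S ℓ)) := by
                refine Finset.sum_congr rfl fun ℓ _ => by ring
            _ = 1 + (x - 1) * 1 := by
                rw [Finset.sum_add_distrib, ← Finset.mul_sum, hsum1, hsum2]
            _ = x := by ring
        have hle : ∑ ℓ ∈ Finset.range (n + 1), propFix S ℓ * (1 + (ℓ:ℝ) * (x - 1))
            ≤ ∑ ℓ ∈ Finset.range (n + 1), propFix S ℓ * x ^ ℓ := by
          refine Finset.sum_le_sum fun ℓ _ => mul_le_mul_of_nonneg_left ?_ (hδnn ℓ)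
          have hb := one_add_mul_le_pow (a := x - 1) (by linarith) ℓ
          calc 1 + (ℓ:ℝ) * (x - 1) ≤ (1 + (x - 1)) ^ ℓ := hb
            _ = x ^ ℓ := by ring_nf
        linarith [key1, hle]
      · have key2 : ∑ ℓ ∈ Finset.range (n + 1), propFix S ℓ * ((0:ℝ) ^ ℓ + (ℓ:ℝ) * x)
            = (∑ ℓ ∈ Finset.range (n + 1), propFix S ℓ * (0:ℝ) ^ ℓ) + x := by
          calc ∑ ℓ ∈ Finset.range (n + 1), propFix S ℓ * ((0:ℝ) ^ ℓ + (ℓ:ℝ) * x)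
              = ∑ ℓ ∈ Finset.range (n + 1),
                  (propFix S ℓ * (0:ℝ) ^ ℓ + x * ((ℓ:ℝ) * propFix S ℓ)) := by
                refine Finset.sum_congr rfl fun ℓ _ => by ring
            _ = _ := by rw [Finset.sum_add_distrib, ← Finset.mul_sum, hsum2, mul_one]
        have hle : ∑ ℓ ∈ Finset.range (n + 1), propFix S ℓ * x ^ ℓ
            ≤ ∑ ℓ ∈ Finset.range (n + 1), propFix S ℓ * ((0:ℝ) ^ ℓ + (ℓ:ℝ) * x) := by
          refine Finset.sum_le_sum fun ℓ _ => mul_le_mul_of_nonneg_left ?_ (hδnn ℓ)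
          cases ℓ with
          | zero => simp
          | succ k =>
            have h1 : x ^ (k + 1) ≤ x ^ 1 :=
              pow_le_pow_of_le_one hx0 hx1 (Nat.succ_le_succ (Nat.zero_le k))
            have h2 : x ≤ ((k:ℝ) + 1) * x := by nlinarith [Nat.cast_nonneg (α := ℝ) k]
            have h0 : ((0:ℝ)) ^ (k + 1) = 0 := by simp
            rw [h0]
            push_cast
            rw [pow_one] at h1
            linarith
        linarith [key2, hle]
end
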